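/- arXiv:1304.6707 — 2 statements merged into one kernel-verified Lean document; each statement's English description precedes it below -/
import Mathlib

section
/- Let 1 ≤ i ≤ n and let j be an integer with j ≥ i. Then τ(v_i, q^{j−i}) ≤ τ′(v_i, q^j) ≤ τ(v_i, q^j) (as elements of ℝ ∪ {−∞,+∞}). -/
open scoped BigOperators

/-- `IsWalk src dst u v p` : the list of edges `p` forms a directed walk from `u` to `v`
in the multigraph whose edges `e` go from `src e` to `dst e`. -/
def IsWalk {V E : Type} (src dst : E → V) : V → V → List E → Prop
  | u, v, [] => u = v
  | u, v, e :: p => src e = u ∧ IsWalk src dst (dst e) v p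

/-- `tau src dst w s v a` : the smallest threshold `L ∈ ℝ` (as an element of
`ℝ ∪ {−∞, +∞}`) such that at least `a` directed `s`–`v` paths have weight at most `L`;
it is `−∞` when `a ≤ 0` and `+∞` when `a` exceeds the total number of `s`–`v` paths. -/
noncomputable def tau {V E : Type} (src dst : E → V) (w : E → ℝ) (s v : V) (a : ℝ) : EReal :=
  sInf {x : EReal | ∃ L : ℝ, x = (L : EReal) ∧
    a ≤ (Nat.card {p : List E // IsWalk src dst s v p ∧ (p.map w).sum ≤ L} : ℝ)}

/-!
Write `N(v, L)` for the number of `s`–`v` paths of weight at most `L`. In a finite DAG there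
are finitely many paths, so `N(v, ·)` is a right-continuous step function and `τ(v, ·)` is its
generalised inverse: `τ(v, a) ≤ L ↔ a ≤ N(v, L)`. For `v ≠ s`, splitting paths by their last
edge gives `N(v, L) = ∑ₑ N(pₑ, L - lₑ)`, and both bounds follow by induction along the
topological order. For the upper bound choose `αₑ` proportional to `N(pₑ, L - lₑ)`. For the
lower bound, if every term of the maximum is at most `L` then `N(v, L) ≥ ∑ₑ αₑ q^(j-i) = q^(j-i)`;
rounding `j + log_q αₑ` down costs one factor of `q` per step of the topological order.
-/

theorem isWalk_append_singleton {V E : Type} {src dst : E → V} {e : E} :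
    ∀ {p : List E} {u v : V},
      IsWalk src dst u v (p ++ [e]) ↔ IsWalk src dst u (src e) p ∧ dst e = v
  | [], _, _ => by simp [IsWalk, eq_comm]
  | _ :: _, _, _ => by simp [IsWalk, isWalk_append_singleton, and_assoc]

variable {n : ℕ} {E : Type} {src dst : E → Fin n} {w : E → ℝ}

theorem IsWalk.val_add_length_le (htopo : ∀ e, src e < dst e) :
    ∀ {p : List E} {u v : Fin n}, IsWalk src dst u v p → u.val + p.length ≤ v.val
  | [], _, _, rfl => le_rfl
  | e :: _, _, _, ⟨rfl, hp⟩ => by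
    have := hp.val_add_length_le htopo
    have := Fin.lt_def.1 (htopo e)
    simp only [List.length_cons]
    omega

theorem IsWalk.eq_nil_of_self (htopo : ∀ e, src e < dst e) {p : List E} {u : Fin n}
    (hp : IsWalk src dst u u p) : p = [] :=
  List.eq_nil_of_length_eq_zero (by have := hp.val_add_length_le htopo; omega)

theorem finite_setOf_isWalk [Finite E] (htopo : ∀ e, src e < dst e) (u v : Fin n) :
    {p : List E | IsWalk src dst u v p}.Finite :=
  (List.finite_length_le E n).subset fun p hp => show p.length ≤ n by
    have := hp.val_add_length_le htopo
    have := v.isLt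
    omega

variable (src dst w) in
noncomputable def pathCount (s v : Fin n) (L : ℝ) : ℕ :=
  Nat.card {p : List E // IsWalk src dst s v p ∧ (p.map w).sum ≤ L}

variable (dst) in
def incoming [Fintype E] (v : Fin n) : Finset E :=
  Finset.univ.filter fun e => dst e = v

theorem finite_isWalk_weight_le [Finite E] (htopo : ∀ e, src e < dst e) (s v : Fin n) (L : ℝ) :
    Finite {p : List E // IsWalk src dst s v p ∧ (p.map w).sum ≤ L} :=
  ((finite_setOf_isWalk htopo s v).subset fun _ hp => hp.1).to_subtype

theorem pathCount_le_of_forall [Finite E] (htopo : ∀ e, src e < dst e) {s v : Fin n} {L L' : ℝ}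
    (h : ∀ p, IsWalk src dst s v p → (p.map w).sum ≤ L → (p.map w).sum ≤ L') :
    pathCount src dst w s v L ≤ pathCount src dst w s v L' :=
  have := finite_isWalk_weight_le (w := w) htopo s v L'
  Nat.card_le_card_of_injective (fun x => ⟨x.1, x.2.1, h _ x.2.1 x.2.2⟩)
    fun _ _ hxy => Subtype.ext (Subtype.mk.inj hxy)

theorem pathCount_mono [Finite E] (htopo : ∀ e, src e < dst e) (s v : Fin n) :
    Monotone (pathCount src dst w s v) :=
  fun _ _ hLL' => pathCount_le_of_forall htopo fun _ _ hp => hp.trans hLL'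

theorem exists_gt_pathCount_le [Finite E] (htopo : ∀ e, src e < dst e) (s v : Fin n) (L : ℝ) :
    ∃ L' > L, pathCount src dst w s v L' ≤ pathCount src dst w s v L := by
  set S := {p | IsWalk src dst s v p ∧ L < (p.map w).sum}
  rcases S.eq_empty_or_nonempty with hS | hS
  · refine ⟨L + 1, by linarith, pathCount_le_of_forall htopo fun p hp _ => ?_⟩
    exact not_lt.1 fun hLp => hS.subset ⟨hp, hLp⟩
  · -- stop halfway to the lightest path that is heavier than `L`
    obtain ⟨p₀, hp₀, hmin⟩ := Set.exists_min_image S (fun p => (p.map w).sum)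
      ((finite_setOf_isWalk htopo s v).subset fun _ hp => hp.1) hS
    refine ⟨(L + (p₀.map w).sum) / 2, by linarith [hp₀.2],
      pathCount_le_of_forall htopo fun p hp hpL => not_lt.1 fun hLp => ?_⟩
    linarith [hmin p ⟨hp, hLp⟩, hp₀.2]

theorem pathCount_self (htopo : ∀ e, src e < dst e) (s : Fin n) (L : ℝ) :
    pathCount src dst w s s L = if 0 ≤ L then 1 else 0 := by
  have hnil : ∀ p, IsWalk src dst s s p ∧ (p.map w).sum ≤ L ↔ p = [] ∧ 0 ≤ L := fun p =>
    ⟨fun ⟨hp, hL⟩ => ⟨hp.eq_nil_of_self htopo, by simpa [hp.eq_nil_of_self htopo] using hL⟩,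
      fun ⟨hp, hL⟩ => hp ▸ ⟨rfl, by simpa using hL⟩⟩
  unfold pathCount
  simp_rw [hnil]
  split_ifs with hL <;> simp [hL]

theorem pathCount_eq_sum [Fintype E] (htopo : ∀ e, src e < dst e) {s v : Fin n} (hsv : s ≠ v)
    (L : ℝ) :
    pathCount src dst w s v L = ∑ e ∈ incoming dst v, pathCount src dst w s (src e) (L - w e) := by
  have := fun e : {e // dst e = v} => finite_isWalk_weight_le (w := w) htopo s (src e.1) (L - w e)
  rw [Finset.sum_subtype _ (p := fun e => dst e = v) (by simp [incoming])]
  simp only [pathCount]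
  rw [← Nat.card_sigma]
  have hweight : ∀ (p : List E) (e : E), ((p ++ [e]).map w).sum = (p.map w).sum + w e := by
    simp
  refine (Nat.card_eq_of_bijective (fun x => ⟨x.2.1 ++ [x.1.1],
    isWalk_append_singleton.2 ⟨x.2.2.1, x.1.2⟩, by linarith [hweight x.2.1 x.1.1, x.2.2.2]⟩)
    ⟨?_, ?_⟩).symm
  · rintro ⟨⟨e, he⟩, ⟨p, hp⟩⟩ ⟨⟨e', he'⟩, ⟨p', hp'⟩⟩ h
    obtain ⟨rfl, h'⟩ := List.append_inj' (congrArg Subtype.val h) rfl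
    obtain rfl := List.singleton_inj.1 h'
    rfl
  · rintro ⟨p, hp, hL⟩
    rcases List.eq_nil_or_concat' p with rfl | ⟨p, e, rfl⟩
    · exact absurd hp hsv
    · obtain ⟨hp, he⟩ := isWalk_append_singleton.1 hp
      exact ⟨⟨⟨e, he⟩, ⟨p, hp, by linarith [hweight p e]⟩⟩, rfl⟩

theorem tau_le_coe {s v : Fin n} {a L : ℝ} (h : a ≤ pathCount src dst w s v L) :
    tau src dst w s v a ≤ L :=
  sInf_le ⟨L, rfl, h⟩

theorem tau_mono (s v : Fin n) : Monotone (tau src dst w s v) :=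
  fun _ _ hab => sInf_le_sInf fun _ ⟨L, hx, hL⟩ => ⟨L, hx, hab.trans hL⟩

theorem tau_of_nonpos (s v : Fin n) {a : ℝ} (ha : a ≤ 0) : tau src dst w s v a = ⊥ :=
  (EReal.eq_bot_iff_forall_lt _).2 fun y =>
    (tau_le_coe (ha.trans (Nat.cast_nonneg _)) : _ ≤ ((y - 1 : ℝ) : EReal)).trans_lt
      (EReal.coe_lt_coe_iff.2 (sub_one_lt y))

theorem tau_le_coe_iff [Finite E] (htopo : ∀ e, src e < dst e) {s v : Fin n} {a L : ℝ} :
    tau src dst w s v a ≤ L ↔ a ≤ pathCount src dst w s v L := by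
  refine ⟨fun h => ?_, tau_le_coe⟩
  obtain ⟨L', hLL', hL'⟩ := exists_gt_pathCount_le (w := w) htopo s v L
  obtain ⟨_, ⟨L'', rfl, ha⟩, hL''⟩ := sInf_lt_iff.1 (h.trans_lt (EReal.coe_lt_coe_iff.2 hLL'))
  calc a ≤ pathCount src dst w s v L'' := ha
    _ ≤ pathCount src dst w s v L' := by
      exact_mod_cast pathCount_mono htopo s v (EReal.coe_lt_coe_iff.1 hL'').le
    _ ≤ pathCount src dst w s v L := by exact_mod_cast hL'

theorem tau_self (htopo : ∀ e, src e < dst e) (s : Fin n) {a : ℝ} (ha : 0 < a) :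
    tau src dst w s s a = if a ≤ 1 then 0 else ⊤ := by
  split_ifs with ha1
  · refine le_antisymm (tau_le_coe (by simp [pathCount_self htopo, ha1])) (le_sInf ?_)
    rintro _ ⟨L, rfl, hL⟩
    change a ≤ (pathCount src dst w s s L : ℝ) at hL
    rw [pathCount_self htopo] at hL
    split_ifs at hL with h0L
    · exact_mod_cast h0L
    · norm_num at hL; linarith
  · refine sInf_eq_top.2 ?_
    rintro _ ⟨L, rfl, hL⟩
    change a ≤ (pathCount src dst w s s L : ℝ) at hL
    rw [pathCount_self htopo] at hL
    split_ifs at hL <;> norm_num at hL <;> linarith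

theorem EReal.le_coe_sub_iff_add_le {x : EReal} {b c : ℝ} :
    x ≤ ((c - b : ℝ) : EReal) ↔ x + b ≤ c := by
  rw [EReal.coe_sub,
    EReal.le_sub_iff_add_le (.inl (EReal.coe_ne_bot b)) (.inl (EReal.coe_ne_top b))]

theorem tau_le_sup_incoming [Fintype E] (htopo : ∀ e, src e < dst e) {s v : Fin n} (hsv : s ≠ v)
    {α : E → ℝ} (hα : ∑ e ∈ incoming dst v, α e = 1) (r : ℝ) :
    tau src dst w s v r ≤
      (incoming dst v).sup fun e => tau src dst w s (src e) (α e * r) + w e := by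
  refine EReal.le_of_forall_lt_iff_le.1 fun z hz => (tau_le_coe_iff htopo).2 ?_
  rw [pathCount_eq_sum htopo hsv, Nat.cast_sum]
  calc r = ∑ e ∈ incoming dst v, α e * r := by rw [← Finset.sum_mul, hα, one_mul]
    _ ≤ _ := Finset.sum_le_sum fun e he => (tau_le_coe_iff htopo).1 <|
      EReal.le_coe_sub_iff_add_le.2 ((Finset.le_sup he).trans hz.le)

theorem exists_weights_tau_le [Fintype E] (htopo : ∀ e, src e < dst e) {s v : Fin n}
    (hsv : s ≠ v) {r L : ℝ} (hr : 0 < r) (hrL : r ≤ pathCount src dst w s v L) :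
    ∃ α : E → ℝ, (∀ e, 0 ≤ α e) ∧ ∑ e ∈ incoming dst v, α e = 1 ∧
      ∀ e, tau src dst w s (src e) (r * α e) ≤ ((L - w e : ℝ) : EReal) := by
  set N : ℝ := (pathCount src dst w s v L : ℝ) with hN_def
  have hN : 0 < N := hr.trans_le hrL
  refine ⟨fun e => pathCount src dst w s (src e) (L - w e) / N, fun e => by positivity, ?_,
    fun e => tau_le_coe ?_⟩
  · rw [← Finset.sum_div, div_eq_one_iff_eq hN.ne', hN_def, pathCount_eq_sum htopo hsv,
      Nat.cast_sum]
  · calc r * (pathCount src dst w s (src e) (L - w e) / N)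
        ≤ N * (pathCount src dst w s (src e) (L - w e) / N) := by gcongr
      _ = pathCount src dst w s (src e) (L - w e) := mul_div_cancel₀ _ hN.ne'

theorem rpow_intCast_add_logb {q α : ℝ} (hq : 1 < q) (hα : 0 < α) (j : ℤ) :
    q ^ ((j : ℝ) + Real.logb q α) = q ^ j * α := by
  rw [Real.rpow_add (by linarith), Real.rpow_intCast, Real.rpow_logb (by linarith) hq.ne' hα]

theorem zpow_floor_add_logb_le {q α : ℝ} (hq : 1 < q) (hα : 0 < α) (j : ℤ) :
    q ^ ⌊(j : ℝ) + Real.logb q α⌋ ≤ q ^ j * α := by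
  rw [← rpow_intCast_add_logb hq hα, ← Real.rpow_intCast]
  exact Real.rpow_le_rpow_of_exponent_le hq.le (Int.floor_le _)

theorem lt_zpow_floor_add_logb_add_one {q α : ℝ} (hq : 1 < q) (hα : 0 < α) (j : ℤ) :
    q ^ j * α < q ^ (⌊(j : ℝ) + Real.logb q α⌋ + 1) := by
  rw [← rpow_intCast_add_logb hq hα, ← Real.rpow_intCast, Int.cast_add, Int.cast_one]
  exact Real.rpow_lt_rpow_of_exponent_lt hq (Int.lt_floor_add_one _)

/-- The right-hand side of the recursion defining `τ′(v, q^j)`. -/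
noncomputable def tauStep [Fintype E] (src dst : E → Fin n) (w : E → ℝ) (q : ℝ)
    (T : Fin n → ℝ → EReal) (v : Fin n) (j : ℤ) : EReal :=
  sInf {x : EReal | ∃ α : E → ℝ, (∀ e, dst e = v → 0 ≤ α e) ∧
    (∑ e ∈ incoming dst v, α e) = 1 ∧
    x = (incoming dst v).sup fun e =>
      T (src e) (if α e = 0 then 0 else q ^ ⌊(j : ℝ) + Real.logb q (α e)⌋) + (w e : EReal)}

theorem tau_le_tauStep [Fintype E] (htopo : ∀ e, src e < dst e) {q : ℝ} (hq : 1 < q)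
    {T : Fin n → ℝ → EReal} {s v : Fin n} (hsv : s ≠ v)
    (ih : ∀ u < v, ∀ k : ℤ, tau src dst w s u (q ^ (k - ((u.val : ℤ) + 1))) ≤ T u (q ^ k))
    (j : ℤ) :
    tau src dst w s v (q ^ (j - ((v.val : ℤ) + 1))) ≤ tauStep src dst w q T v j := by
  refine le_sInf ?_
  rintro _ ⟨α, hα0, hα1, rfl⟩
  refine (tau_le_sup_incoming htopo hsv hα1 _).trans (Finset.sup_mono_fun fun e he => ?_)
  gcongr
  split_ifs with hαe
  · rw [hαe, zero_mul, tau_of_nonpos _ _ le_rfl]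
    exact bot_le
  have hev : dst e = v := (Finset.mem_filter.1 he).2
  have hα : 0 < α e := (hα0 e hev).lt_of_ne' hαe
  have huv : (src e).val + 1 ≤ v.val := hev ▸ htopo e
  set k := ⌊(j : ℝ) + Real.logb q (α e)⌋
  refine (tau_mono _ _ ?_).trans (ih (src e) (hev ▸ htopo e) k)
  -- rounding `j + log_q α` down loses less than one factor of `q`, and `src e` precedes `v`
  calc α e * q ^ (j - ((v.val : ℤ) + 1)) = q ^ j * α e * q ^ (-((v.val : ℤ) + 1)) := by
        rw [sub_eq_add_neg, zpow_add₀ (by positivity)]; ring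
    _ ≤ q ^ (k + 1) * q ^ (-((v.val : ℤ) + 1)) := by
        gcongr; exact (lt_zpow_floor_add_logb_add_one hq hα j).le
    _ = q ^ (k + 1 - ((v.val : ℤ) + 1)) := by
        rw [← zpow_add₀ (by positivity), sub_eq_add_neg]
    _ ≤ q ^ (k - (((src e).val : ℤ) + 1)) := zpow_le_zpow_right₀ hq.le (by omega)

theorem tauStep_le_tau [Fintype E] (htopo : ∀ e, src e < dst e) {q : ℝ} (hq : 1 < q)
    {T : Fin n → ℝ → EReal} (hT0 : ∀ u, T u 0 = ⊥) {s v : Fin n} (hsv : s ≠ v)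
    (ih : ∀ u < v, ∀ k : ℤ, T u (q ^ k) ≤ tau src dst w s u (q ^ k)) (j : ℤ) :
    tauStep src dst w q T v j ≤ tau src dst w s v (q ^ j) := by
  refine le_sInf ?_
  rintro _ ⟨L, rfl, hL⟩
  obtain ⟨α, hα0, hα1, hα⟩ := exists_weights_tau_le htopo hsv (zpow_pos (by linarith) j) hL
  refine le_trans (sInf_le ⟨α, fun e _ => hα0 e, hα1, rfl⟩) (Finset.sup_le fun e he => ?_)
  rw [← EReal.le_coe_sub_iff_add_le]
  split_ifs with hαe
  · rw [hT0]
    exact bot_le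
  have hev : dst e = v := (Finset.mem_filter.1 he).2
  exact (ih (src e) (hev ▸ htopo e) _).trans <| (tau_mono _ _ <|
    zpow_floor_add_logb_le hq ((hα0 e).lt_of_ne' hαe) j).trans (hα e)

theorem stmt0_general
    {n : ℕ} (hn : 0 < n) {E : Type} [Fintype E]
    (src dst : E → Fin n) (w : E → ℝ)
    (htopo : ∀ e, src e < dst e)
    (q : ℝ) (hq : 1 < q)
    (T : Fin n → ℝ → EReal)
    (hT0 : ∀ v : Fin n, T v 0 = ⊥)
    (hTs1 : ∀ a : ℝ, 0 < a → a ≤ 1 → T ⟨0, hn⟩ a = 0)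
    (hTs2 : ∀ a : ℝ, 1 < a → T ⟨0, hn⟩ a = ⊤)
    (hTrec : ∀ v : Fin n, v ≠ ⟨0, hn⟩ → ∀ j : ℤ,
      T v (q ^ j) = sInf {x : EReal |
        ∃ α : E → ℝ, (∀ e, dst e = v → 0 ≤ α e) ∧
          (∑ e ∈ Finset.univ.filter (fun e => dst e = v), α e) = 1 ∧
          x = (Finset.univ.filter (fun e => dst e = v)).sup
            (fun e => T (src e)
              (if α e = 0 then 0 else q ^ ⌊(j : ℝ) + Real.logb q (α e)⌋) + (w e : EReal))})
    (v : Fin n) (j : ℤ) :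
    tau src dst w ⟨0, hn⟩ v (q ^ (j - ((v.val : ℤ) + 1))) ≤ T v (q ^ j) ∧
      T v (q ^ j) ≤ tau src dst w ⟨0, hn⟩ v (q ^ j) := by
  induction v using WellFoundedLT.induction generalizing j with
  | ind v ih =>
    by_cases hv : v = ⟨0, hn⟩
    · subst hv
      have hpos : 0 < q ^ j := zpow_pos (by linarith) j
      have hT : T ⟨0, hn⟩ (q ^ j) = tau src dst w ⟨0, hn⟩ ⟨0, hn⟩ (q ^ j) := by
        rw [tau_self htopo _ hpos]
        split_ifs with hle
        exacts [hTs1 _ hpos hle, hTs2 _ (not_le.1 hle)]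
      rw [hT]
      exact ⟨tau_mono _ _ (zpow_le_zpow_right₀ hq.le (by omega)), le_rfl⟩
    · have hsv : (⟨0, hn⟩ : Fin n) ≠ v := Ne.symm hv
      rw [hTrec v hv j]
      exact ⟨tau_le_tauStep htopo hq hsv (fun u hu k => (ih u hu k).1) j,
        tauStep_le_tau htopo hq hT0 hsv (fun u hu k => (ih u hu k).2) j⟩

theorem stmt0
    {n : ℕ} (hn : 0 < n) {E : Type} [Fintype E]
    (src dst : E → Fin n) (w : E → ℝ)
    (htopo : ∀ e, src e < dst e)
    (hin : ∀ v : Fin n, v ≠ ⟨0, hn⟩ → ∃ e, dst e = v)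
    (q : ℝ) (hq : 1 < q)
    (T : Fin n → ℝ → EReal)
    (hT0 : ∀ v : Fin n, T v 0 = ⊥)
    (hTs1 : ∀ a : ℝ, 0 < a → a ≤ 1 → T ⟨0, hn⟩ a = 0)
    (hTs2 : ∀ a : ℝ, 1 < a → T ⟨0, hn⟩ a = ⊤)
    (hTrec : ∀ v : Fin n, v ≠ ⟨0, hn⟩ → ∀ j : ℤ,
      T v (q ^ j) = sInf {x : EReal |
        ∃ α : E → ℝ, (∀ e, dst e = v → 0 ≤ α e) ∧
          (∑ e ∈ Finset.univ.filter (fun e => dst e = v), α e) = 1 ∧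
          x = (Finset.univ.filter (fun e => dst e = v)).sup
            (fun e => T (src e)
              (if α e = 0 then 0 else q ^ ⌊(j : ℝ) + Real.logb q (α e)⌋) + (w e : EReal))})
    (v : Fin n) (j : ℤ) (hj : (v.val : ℤ) + 1 ≤ j) :
    tau src dst w ⟨0, hn⟩ v (q ^ (j - ((v.val : ℤ) + 1))) ≤ T v (q ^ j) ∧
      T v (q ^ j) ≤ tau src dst w ⟨0, hn⟩ v (q ^ j) :=
  stmt0_general hn src dst w htopo q hq T hT0 hTs1 hTs2 hTrec v j
end

section
/- For every 1 ≤ i ≤ n, the function j ↦ τ′(v_i, q^j) is monotone nondecreasing in the integer j: for all integers j ≤ j′, τ′(v_i, q^j) ≤ τ′(v_i, q^{j′}) in ℝ ∪ {−∞,+∞}. -/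
/-!
Induction along the topological order. At the source, `j ↦ τ′(s, q^j)` is the step function
`0` for `j ≤ 0`, `+∞` for `j > 0`. At any other vertex, fix a split `α`: raising `j` raises
every floor `⌊j + log_q α_e⌋`, hence (by induction) every term of the max, so each candidate
value of the min grows with `j`, and so does their infimum.
-/

open Finset

theorem monotone_floor_intCast_add (c : ℝ) : Monotone fun j : ℤ => ⌊(j : ℝ) + c⌋ :=
  fun _ _ h => Int.floor_mono (by gcongr)

theorem monotone_zpow_of_eq_zero_of_eq_top {q : ℝ} (hq : 1 < q) {f : ℝ → EReal}
    (hle : ∀ a, 0 < a → a ≤ 1 → f a = 0) (hgt : ∀ a, 1 < a → f a = ⊤) :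
    Monotone fun j : ℤ => f (q ^ j) := by
  intro j j' hjj'
  dsimp only
  rcases le_or_gt j' 0 with hj' | hj'
  · have hq₀ : 0 < q := zero_lt_one.trans hq
    rw [hle _ (zpow_pos hq₀ j) (zpow_le_one_of_nonpos₀ hq.le (hjj'.trans hj')),
      hle _ (zpow_pos hq₀ j') (zpow_le_one_of_nonpos₀ hq.le hj')]
  · rw [hgt _ (one_lt_zpow₀ hq hj')]
    exact le_top

section MinMaxRecursion

variable {V E : Type*} [Fintype E] [DecidableEq V] {src dst : E → V} (w : E → ℝ) (q : ℝ)
  {T : V → ℝ → EReal} {v : V}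

theorem monotone_sup_incoming
    (hpred : ∀ e, dst e = v → Monotone fun j : ℤ => T (src e) (q ^ j)) (α : E → ℝ) :
    Monotone fun j : ℤ => (univ.filter fun e => dst e = v).sup fun e =>
      T (src e) (if α e = 0 then 0 else q ^ ⌊(j : ℝ) + Real.logb q (α e)⌋) + (w e : EReal) := by
  intro j j' hjj'
  refine Finset.sup_mono_fun fun e he => ?_
  split_ifs
  · rfl
  · gcongr
    exact hpred e (mem_filter.mp he).2 (monotone_floor_intCast_add _ hjj')

theorem monotone_of_minMax_recursion
    (hpred : ∀ e, dst e = v → Monotone fun j : ℤ => T (src e) (q ^ j))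
    (hrec : ∀ j : ℤ, T v (q ^ j) = sInf {x : EReal |
        ∃ α : E → ℝ, (∀ e, dst e = v → 0 ≤ α e) ∧
          (∑ e ∈ univ.filter (fun e => dst e = v), α e) = 1 ∧
          x = (univ.filter (fun e => dst e = v)).sup
            (fun e => T (src e)
              (if α e = 0 then 0 else q ^ ⌊(j : ℝ) + Real.logb q (α e)⌋) + (w e : EReal))}) :
    Monotone fun j : ℤ => T v (q ^ j) := by
  intro j j' hjj'
  dsimp only
  rw [hrec j, hrec j']
  refine le_sInf ?_
  rintro _ ⟨α, hα_nonneg, hα_sum, rfl⟩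
  exact le_trans (sInf_le ⟨α, hα_nonneg, hα_sum, rfl⟩) (monotone_sup_incoming w q hpred α hjj')

end MinMaxRecursion

theorem stmt12_general
    {n : ℕ} (hn : 0 < n) {E : Type} [Fintype E]
    (src dst : E → Fin n) (w : E → ℝ)
    (htopo : ∀ e, src e < dst e)
    (q : ℝ) (hq : 1 < q)
    (T : Fin n → ℝ → EReal)
    (hTs1 : ∀ a : ℝ, 0 < a → a ≤ 1 → T ⟨0, hn⟩ a = 0)
    (hTs2 : ∀ a : ℝ, 1 < a → T ⟨0, hn⟩ a = ⊤)
    (hTrec : ∀ v : Fin n, v ≠ ⟨0, hn⟩ → ∀ j : ℤ,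
      T v (q ^ j) = sInf {x : EReal |
        ∃ α : E → ℝ, (∀ e, dst e = v → 0 ≤ α e) ∧
          (∑ e ∈ Finset.univ.filter (fun e => dst e = v), α e) = 1 ∧
          x = (Finset.univ.filter (fun e => dst e = v)).sup
            (fun e => T (src e)
              (if α e = 0 then 0 else q ^ ⌊(j : ℝ) + Real.logb q (α e)⌋) + (w e : EReal))}) :
    ∀ v : Fin n, ∀ j j' : ℤ, j ≤ j' → T v (q ^ j) ≤ T v (q ^ j') := by
  intro v
  induction v using WellFoundedLT.induction with
  | _ v ih =>
    by_cases hv : v = ⟨0, hn⟩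
    · subst hv
      exact monotone_zpow_of_eq_zero_of_eq_top hq hTs1 hTs2
    · refine monotone_of_minMax_recursion w q (fun e he => ?_) (hTrec v hv)
      exact ih (src e) (he ▸ htopo e)

theorem stmt12
    {n : ℕ} (hn : 0 < n) {E : Type} [Fintype E]
    (src dst : E → Fin n) (w : E → ℝ)
    (htopo : ∀ e, src e < dst e)
    (hin : ∀ v : Fin n, v ≠ ⟨0, hn⟩ → ∃ e, dst e = v)
    (q : ℝ) (hq : 1 < q)
    (T : Fin n → ℝ → EReal)
    (hT0 : ∀ v : Fin n, T v 0 = ⊥)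
    (hTs1 : ∀ a : ℝ, 0 < a → a ≤ 1 → T ⟨0, hn⟩ a = 0)
    (hTs2 : ∀ a : ℝ, 1 < a → T ⟨0, hn⟩ a = ⊤)
    (hTrec : ∀ v : Fin n, v ≠ ⟨0, hn⟩ → ∀ j : ℤ,
      T v (q ^ j) = sInf {x : EReal |
        ∃ α : E → ℝ, (∀ e, dst e = v → 0 ≤ α e) ∧
          (∑ e ∈ Finset.univ.filter (fun e => dst e = v), α e) = 1 ∧
          x = (Finset.univ.filter (fun e => dst e = v)).sup
            (fun e => T (src e)
              (if α e = 0 then 0 else q ^ ⌊(j : ℝ) + Real.logb q (α e)⌋) + (w e : EReal))}) :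
    ∀ v : Fin n, ∀ j j' : ℤ, j ≤ j' → T v (q ^ j) ≤ T v (q ^ j') :=
  stmt12_general hn src dst w htopo q hq T hTs1 hTs2 hTrec
end
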